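/- For every prime p not dividing 42, the number of points (including the point at infinity) on the elliptic curve y² + xy + y = x³ + x² - 4x + 5 over the field with p elements is divisible by 8. -/

import Mathlib

/-!
For `p ∤ 42` the curve is elliptic over `𝔽_p`, its discriminant being `-2⁸·3²·7`, and the point
`T = (-1, 3)` has order `8` there: doubling gives `2T = (1, -3)` and `4T = (-3, 1)`, and `4T` is a
point of order `2`. By Lagrange, `8` divides the order of the group `E(𝔽_p)`, which consists of the
affine solutions and the point at infinity.
-/

open WeierstrassCurve WeierstrassCurve.Affine

namespace WeierstrassCurve.Affine

lemma natCard_point_eq_natCard_equation_add_one {R : Type*} [CommRing R] [Nontrivial R]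
    [Finite R] (W : WeierstrassCurve.Affine R) [W.IsElliptic] :
    Nat.card W.Point = Nat.card {xy : R × R // W.Equation xy.1 xy.2} + 1 := by
  rw [Nat.card_congr (W.nonsingularPointEquiv.trans
    (Equiv.subtypeEquivRight fun _ => equation_iff_nonsingular.symm).optionCongr)]
  exact Finite.card_option

lemma Point.some_add_self_eq {F : Type*} [Field F] [DecidableEq F] {W : WeierstrassCurve.Affine F}
    {x y x' y' : F} {h : W.Nonsingular x y} {h' : W.Nonsingular x' y'} (hy : y ≠ W.negY x y)
    (hx' : W.addX x x (W.slope x x y y) = x') (hy' : W.addY x x y (W.slope x x y y) = y') :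
    Point.some _ _ h + Point.some _ _ h = Point.some _ _ h' := by
  rw [Point.add_self_of_Y_ne hy, Point.some.injEq]
  exact ⟨hx', hy'⟩

end WeierstrassCurve.Affine

def curve42A (R : Type*) [CommRing R] : WeierstrassCurve.Affine R :=
  { a₁ := 1, a₂ := 1, a₃ := 1, a₄ := -4, a₆ := 5 }

namespace curve42A

section CommRing

variable {R : Type*} [CommRing R]

lemma Δ_eq : (curve42A R).Δ = -16128 := by
  simp only [curve42A, Δ, b₂, b₄, b₆, b₈]
  norm_num

lemma equation_iff {x y : R} :
    (curve42A R).Equation x y ↔ y ^ 2 + x * y + y = x ^ 3 + x ^ 2 - 4 * x + 5 := by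
  rw [Affine.equation_iff]
  simp only [curve42A]
  constructor <;> intro h <;> linear_combination h

lemma isElliptic_zmod {p : ℕ} [Fact p.Prime] (h : ¬ p ∣ 42) : (curve42A (ZMod p)).IsElliptic := by
  rw [isElliptic_iff, Δ_eq, isUnit_iff_ne_zero, neg_ne_zero]
  intro h0
  have h16128 : p ∣ 16128 := (ZMod.natCast_eq_zero_iff 16128 p).mp (by exact_mod_cast h0)
  exact h ((Fact.out : p.Prime).dvd_of_dvd_pow (h16128.trans (by norm_num : 16128 ∣ 42 ^ 8)))

end CommRing

section Field

variable {F : Type*} [Field F] [(curve42A F).IsElliptic]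

lemma natCast_ne_zero_of_dvd {n : ℕ} (hn : n ∣ 16128) : (n : F) ≠ 0 := by
  obtain ⟨k, hk⟩ := hn
  intro h0
  apply (curve42A F).isUnit_Δ.ne_zero
  rw [Δ_eq, show (16128 : F) = ((16128 : ℕ) : F) by norm_num, hk, Nat.cast_mul, h0,
    zero_mul, neg_zero]

noncomputable def torsionPoint : (curve42A F).Point :=
  Point.mk (x := -1) (y := 3) (by rw [equation_iff]; ring)

variable [DecidableEq F]

lemma two_nsmul_torsionPoint :
    2 • torsionPoint (F := F) = Point.mk (x := (1 : F)) (y := -3) (by rw [equation_iff]; ring) := by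
  have h6 : (6 : F) ≠ 0 := by exact_mod_cast natCast_ne_zero_of_dvd (F := F) (by norm_num)
  have hy : (3 : F) ≠ (curve42A F).negY (-1) 3 := by
    simp only [negY, curve42A]
    intro hc; apply h6; linear_combination hc
  have hslope : (curve42A F).slope (-1) (-1) 3 3 = -1 := by
    rw [slope_of_Y_ne rfl hy, div_eq_iff (sub_ne_zero.mpr hy)]
    simp only [negY, curve42A]; ring
  rw [two_nsmul]
  apply Point.some_add_self_eq hy
  · rw [hslope]; simp only [addX, curve42A]; ring
  · rw [hslope]; simp only [addY, negAddY, addX, negY, curve42A]; ring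

lemma four_nsmul_torsionPoint :
    4 • torsionPoint (F := F) = Point.mk (x := (-3 : F)) (y := 1) (by rw [equation_iff]; ring) := by
  have h4 : (4 : F) ≠ 0 := by exact_mod_cast natCast_ne_zero_of_dvd (F := F) (by norm_num)
  have hy : (-3 : F) ≠ (curve42A F).negY 1 (-3) := by
    simp only [negY, curve42A]
    intro hc; apply h4; linear_combination -hc
  have hslope : (curve42A F).slope 1 1 (-3) (-3) = -1 := by
    rw [slope_of_Y_ne rfl hy, div_eq_iff (sub_ne_zero.mpr hy)]
    simp only [negY, curve42A]; ring
  calc 4 • torsionPoint = 2 • 2 • torsionPoint := by rw [← mul_nsmul]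
    _ = _ := by
      rw [two_nsmul_torsionPoint, two_nsmul]
      apply Point.some_add_self_eq hy
      · rw [hslope]; simp only [addX, curve42A]; ring
      · rw [hslope]; simp only [addY, negAddY, addX, negY, curve42A]; ring

lemma addOrderOf_torsionPoint : addOrderOf (torsionPoint (F := F)) = 8 := by
  have h4 : 4 • torsionPoint (F := F) ≠ 0 := by
    rw [four_nsmul_torsionPoint]
    exact Point.some_ne_zero _
  have h8 : 8 • torsionPoint (F := F) = 0 := by
    rw [show 8 = 4 * 2 by rfl, mul_nsmul, four_nsmul_torsionPoint, two_nsmul]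
    apply Point.add_self_of_Y_eq
    simp only [negY, curve42A]; ring
  exact addOrderOf_eq_prime_pow (p := 2) (n := 2) h4 h8

end Field

end curve42A

theorem stmt_7 (p : ℕ) (hp : p.Prime) (h : ¬ (p ∣ 42)) :
    8 ∣ Nat.card {P : ZMod p × ZMod p //
      P.2 ^ 2 + P.1 * P.2 + P.2 = P.1 ^ 3 + P.1 ^ 2 - 4 * P.1 + 5} + 1 := by
  have : Fact p.Prime := ⟨hp⟩
  have : (curve42A (ZMod p)).IsElliptic := curve42A.isElliptic_zmod h
  have h8 : 8 ∣ Nat.card (curve42A (ZMod p)).Point :=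
    curve42A.addOrderOf_torsionPoint (F := ZMod p) ▸ addOrderOf_dvd_natCard curve42A.torsionPoint
  simpa only [natCard_point_eq_natCard_equation_add_one, curve42A.equation_iff] using h8
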